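/- The deterministic Almost-One-Step-Ahead algorithm with grid parameter m achieves CalDist(p^{1:T}, y^{1:T}) ≤ T/m + m against every outcome sequence y^{1:T} ∈ {0,1}^T; in particular, with m = ⌈√T⌉ it achieves CalDist(p^{1:T}, y^{1:T}) ≤ 2√T (for T ≥ 1). -/
import Mathlib
open Finset
open scoped Classical

noncomputable def ECE {T : ℕ} (p y : Fin T → ℝ) : ℝ :=
  ∑ v ∈ Finset.univ.image p, |∑ t, if p t = v then p t - y t else 0|

noncomputable def calDist {T : ℕ} (p y : Fin T → ℝ) : ℝ :=
  sInf {c | ∃ q : Fin T → ℝ, ECE q y = 0 ∧ c = ∑ t, |p t - q t|}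

noncomputable def bias {T : ℕ} (p y : Fin T → ℝ) (t : ℕ) (v : ℝ) : ℝ :=
  ∑ s ∈ Finset.univ.filter (fun s : Fin T => (s : ℕ) < t), if p s = v then p s - y s else 0

lemma bias_zero {T : ℕ} (p y : Fin T → ℝ) (v : ℝ) : bias p y 0 v = 0 := by
  simp [bias]

lemma bias_succ {T : ℕ} (p y : Fin T → ℝ) (t : ℕ) (ht : t < T) (v : ℝ) :
    bias p y (t+1) v = bias p y t v +
      (if p ⟨t, ht⟩ = v then p ⟨t, ht⟩ - y ⟨t, ht⟩ else 0) := by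
  unfold bias
  have h : (Finset.univ.filter (fun s : Fin T => (s : ℕ) < t+1)) =
      insert ⟨t, ht⟩ (Finset.univ.filter (fun s : Fin T => (s : ℕ) < t)) := by
    ext s
    simp only [Finset.mem_filter, Finset.mem_univ, true_and, Finset.mem_insert]
    constructor
    · intro hs
      rcases Nat.lt_succ_iff_lt_or_eq.1 hs with h1 | h1
      · exact Or.inr h1
      · exact Or.inl (Fin.ext h1)
    · rintro (rfl | hs)
      · exact Nat.lt_succ_self t
      · exact Nat.lt_succ_of_lt hs
  rw [h, Finset.sum_insert (by simp)]
  ring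

lemma bias_top {T : ℕ} (p y : Fin T → ℝ) (v : ℝ) :
    bias p y T v = ∑ t, if p t = v then p t - y t else 0 := by
  unfold bias
  congr 1
  ext s
  simp [s.isLt]

theorem almost_one_step_ahead {T m : ℕ} (hT : 1 ≤ T) (hm : 1 ≤ m)
    (y p pt : Fin T → ℝ) (i : Fin T → ℕ)
    (hy : ∀ t, y t = 0 ∨ y t = 1)
    (hi : ∀ t, i t < m)
    (hsign : ∀ t : Fin T, bias pt y t ((i t : ℝ) / m) ≤ 0 ∧
      bias pt y t (((i t : ℝ) + 1) / m) ≥ 0)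
    (hp : ∀ t : Fin T, p t = (i t : ℝ) / m ∨ p t = ((i t : ℝ) + 1) / m)
    (hpt : ∀ t : Fin T, pt t = (i t : ℝ) / m ∨ pt t = ((i t : ℝ) + 1) / m)
    (hargmin : ∀ t : Fin T, ∀ v ∈ ({(i t : ℝ) / m, ((i t : ℝ) + 1) / m} : Set ℝ),
      |pt t - y t| ≤ |v - y t|) :
    calDist p y ≤ (T : ℝ) / m + m ∧
      (m = ⌈Real.sqrt T⌉₊ → calDist p y ≤ 2 * Real.sqrt T) := by
  have hm0 : (0:ℝ) < m := by exact_mod_cast hm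
  have hlt : ∀ s : Fin T, ((i s : ℝ)) / m < ((i s : ℝ) + 1) / m := by
    intro s
    rw [div_lt_div_iff₀ hm0 hm0]
    nlinarith
  have him : ∀ s : Fin T, ((i s : ℝ) + 1) / m ≤ 1 := by
    intro s
    rw [div_le_one hm0]
    have : (i s : ℝ) + 1 ≤ m := by exact_mod_cast hi s
    linarith
  have hil : ∀ s : Fin T, (0:ℝ) ≤ (i s : ℝ) / m := fun s => by positivity
  -- per-round case analysis: the chosen prediction matches the outcome side
  have hcase : ∀ s : Fin T,
      (y s = 0 ∧ pt s = (i s : ℝ) / m) ∨ (y s = 1 ∧ pt s = ((i s : ℝ) + 1) / m) := by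
    intro s
    rcases hy s with h0 | h1
    · rcases hpt s with h | h
      · exact Or.inl ⟨h0, h⟩
      · exfalso
        have ha := hargmin s ((i s : ℝ) / m) (Or.inl rfl)
        rw [h0, h, sub_zero, sub_zero, abs_of_nonneg (hil s),
          abs_of_nonneg (le_of_lt (lt_of_le_of_lt (hil s) (hlt s)))] at ha
        linarith [hlt s]
    · rcases hpt s with h | h
      · exfalso
        have ha := hargmin s (((i s : ℝ) + 1) / m) (Or.inr rfl)
        have h1a : (i s : ℝ) / m - 1 ≤ 0 := by linarith [hlt s, him s]
        have h1b : ((i s : ℝ) + 1) / m - 1 ≤ 0 := by linarith [him s]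
        rw [h1, h, abs_of_nonpos h1a, abs_of_nonpos h1b] at ha
        linarith [hlt s]
      · exact Or.inr ⟨h1, h⟩
  -- invariant: every bucket bias stays in [-1, 1]
  have hbound : ∀ t, t ≤ T → ∀ v, |bias pt y t v| ≤ 1 := by
    intro t
    induction t with
    | zero => intro _ v; simp [bias_zero]
    | succ t ih =>
      intro ht v
      have htT : t < T := ht
      rw [bias_succ pt y t htT v]
      by_cases hv : pt ⟨t, htT⟩ = v
      · set s : Fin T := ⟨t, htT⟩ with hs
        rw [if_pos hv]
        have hb := ih htT.le v
        rw [abs_le] at hb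
        rcases hcase s with ⟨h0, hps⟩ | ⟨h1, hps⟩
        · have hδ1 : (0:ℝ) ≤ pt s - y s := by rw [h0, hps, sub_zero]; exact hil s
          have hδ2 : pt s - y s ≤ 1 := by
            rw [h0, hps, sub_zero]
            exact le_of_lt (lt_of_lt_of_le (hlt s) (him s))
          have hbs : bias pt y t v ≤ 0 := by
            rw [← hv, hps]; exact (hsign s).1
          rw [abs_le]; constructor <;> linarith
        · have hδ1 : pt s - y s ≤ 0 := by rw [h1, hps]; linarith [him s]
          have hδ2 : (-1:ℝ) ≤ pt s - y s := by
            rw [h1, hps]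
            have : (0:ℝ) ≤ ((i s : ℝ) + 1) / m := le_of_lt (lt_of_le_of_lt (hil s) (hlt s))
            linarith
          have hbs : (0:ℝ) ≤ bias pt y t v := by
            rw [← hv, hps]; exact (hsign s).2
          rw [abs_le]; constructor <;> linarith
      · rw [if_neg hv, add_zero]; exact ih htT.le v
  -- endpoint buckets never accumulate error
  have hzero : ∀ s : Fin T, (pt s = 0 ∨ pt s = 1) → pt s - y s = 0 := by
    intro s hs
    rcases hcase s with ⟨h0, hps⟩ | ⟨h1, hps⟩
    · rcases hs with h | h
      · rw [h, h0, sub_zero]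
      · exfalso
        have : ((i s : ℝ)) / m < 1 := lt_of_lt_of_le (hlt s) (him s)
        rw [hps] at h; linarith
    · rcases hs with h | h
      · exfalso
        have : (0:ℝ) < ((i s : ℝ) + 1) / m := lt_of_le_of_lt (hil s) (hlt s)
        rw [hps] at h; linarith
      · rw [h, h1, sub_self]
  -- the terminal per-value errors
  set S : ℝ → ℝ := fun v => ∑ t, if pt t = v then pt t - y t else 0 with hS
  have hS1 : ∀ v, |S v| ≤ 1 := by
    intro v
    rw [hS]
    simp only
    rw [← bias_top]
    exact hbound T le_rfl v
  have hS0 : ∀ v, (v = 0 ∨ v = 1) → S v = 0 := by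
    intro v hv
    apply Finset.sum_eq_zero
    intro t _
    by_cases h : pt t = v
    · rw [if_pos h]
      exact hzero t (by rcases hv with rfl | rfl; exacts [Or.inl h, Or.inr h])
    · rw [if_neg h]
  -- ECE of the hypothetical one-step-ahead forecaster is at most m - 1
  have hECEpt : ∑ w ∈ Finset.univ.image pt, |S w| ≤ (m:ℝ) - 1 := by
    have hfilter : ∑ w ∈ Finset.univ.image pt, |S w| =
        ∑ w ∈ (Finset.univ.image pt).filter (fun v => v ≠ 0 ∧ v ≠ 1), |S w| := by
      rw [Finset.sum_filter_of_ne]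
      intro v _ hv
      constructor
      · rintro rfl; exact hv (by rw [hS0 0 (Or.inl rfl), abs_zero])
      · rintro rfl; exact hv (by rw [hS0 1 (Or.inr rfl), abs_zero])
    rw [hfilter]
    have hsub : (Finset.univ.image pt).filter (fun v => v ≠ 0 ∧ v ≠ 1) ⊆
        (Finset.Icc 1 (m-1)).image (fun j : ℕ => (j:ℝ)/m) := by
      intro v hv
      simp only [Finset.mem_filter, Finset.mem_image, Finset.mem_univ, true_and] at hv
      obtain ⟨⟨t, htv⟩, hv0, hv1⟩ := hv
      have hcases : ∃ j : ℕ, j ≤ m ∧ v = (j:ℝ)/m := by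
        rcases hpt t with h | h
        · exact ⟨i t, (hi t).le, by rw [← htv, h]⟩
        · refine ⟨i t + 1, hi t, ?_⟩
          rw [← htv, h]; push_cast; ring
      obtain ⟨j, hjm, hjv⟩ := hcases
      have hj0 : j ≠ 0 := by
        rintro rfl; exact hv0 (by rw [hjv]; simp)
      have hjm' : j ≠ m := by
        rintro rfl
        exact hv1 (by rw [hjv, div_self hm0.ne'])
      refine Finset.mem_image.2 ⟨j, Finset.mem_Icc.2 ⟨?_, ?_⟩, hjv.symm⟩
      · omega
      · omega
    calc ∑ w ∈ (Finset.univ.image pt).filter (fun v => v ≠ 0 ∧ v ≠ 1), |S w|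
        ≤ ∑ _w ∈ (Finset.univ.image pt).filter (fun v => v ≠ 0 ∧ v ≠ 1), (1:ℝ) :=
          Finset.sum_le_sum (fun w _ => hS1 w)
      _ = ((Finset.univ.image pt).filter (fun v => v ≠ 0 ∧ v ≠ 1)).card := by
          rw [Finset.sum_const, nsmul_eq_mul, mul_one]
      _ ≤ ((Finset.Icc 1 (m-1)).image (fun j : ℕ => (j:ℝ)/m)).card := by
          exact_mod_cast Finset.card_le_card hsub
      _ ≤ (Finset.Icc 1 (m-1)).card := by exact_mod_cast Finset.card_image_le
      _ = ((m - 1 : ℕ) : ℝ) := by rw [Nat.card_Icc]; norm_cast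
      _ = (m:ℝ) - 1 := by
          rw [Nat.cast_sub hm, Nat.cast_one]
  -- define the calibrated competitor q: bucket averages of pt
  set B : ℝ → Finset (Fin T) := fun w => Finset.univ.filter (fun t => pt t = w) with hB
  set q : Fin T → ℝ := fun t => (∑ s ∈ B (pt t), y s) / (B (pt t)).card with hq
  have hqc : ∀ w, ∀ t ∈ B w, q t = (∑ s ∈ B w, y s) / (B w).card := by
    intro w t ht
    rw [hB] at ht
    simp only [Finset.mem_filter] at ht
    rw [hq]; simp only; rw [ht.2]
  have hsum_q : ∀ w : ℝ, (B w).Nonempty → ∑ t ∈ B w, (q t - y t) = 0 := by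
    intro w hw
    have hcard : ((B w).card : ℝ) ≠ 0 := by
      exact_mod_cast Finset.card_ne_zero_of_mem hw.choose_spec
    rw [Finset.sum_sub_distrib]
    have : ∑ t ∈ B w, q t = ∑ s ∈ B w, y s := by
      rw [Finset.sum_congr rfl (hqc w), Finset.sum_const, nsmul_eq_mul,
        mul_div_cancel₀ _ hcard]
    rw [this, sub_self]
  -- q is perfectly calibrated
  have hECEq : ECE q y = 0 := by
    unfold ECE
    apply Finset.sum_eq_zero
    intro v _
    rw [abs_eq_zero, ← Finset.sum_filter]
    rw [← Finset.sum_fiberwise_of_maps_to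
      (fun x _ => Finset.mem_image_of_mem pt (Finset.mem_univ x))
      (fun t => q t - y t)]
    apply Finset.sum_eq_zero
    intro w hw
    have hswap : (Finset.univ.filter (fun t => q t = v)).filter (fun t => pt t = w)
        = (B w).filter (fun t => q t = v) := by
      rw [hB, Finset.filter_filter, Finset.filter_filter]
      congr 1
      ext t
      exact and_comm
    rw [hswap]
    by_cases hcw : (∑ s ∈ B w, y s) / ((B w).card : ℝ) = v
    · have : (B w).filter (fun t => q t = v) = B w := by
        apply Finset.filter_true_of_mem
        intro t ht
        rw [hqc w t ht, hcw]
      rw [this]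
      apply hsum_q
      obtain ⟨t, htw⟩ := Finset.mem_image.1 hw
      exact ⟨t, by rw [hB]; simp [htw.2]⟩
    · have : (B w).filter (fun t => q t = v) = ∅ := by
        apply Finset.filter_false_of_mem
        intro t ht h
        exact hcw (by rw [← hqc w t ht]; exact h)
      rw [this, Finset.sum_empty]
  -- distance from pt to q equals the ECE of pt
  have hdist_ptq : ∑ t, |pt t - q t| ≤ (m:ℝ) - 1 := by
    have hfib : ∑ t, |pt t - q t| =
        ∑ w ∈ Finset.univ.image pt, ∑ t ∈ (Finset.univ.filter (fun t => pt t = w)),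
          |pt t - q t| :=
      (Finset.sum_fiberwise_of_maps_to
        (fun x _ => Finset.mem_image_of_mem pt (Finset.mem_univ x)) _).symm
    rw [hfib]
    refine le_trans (Finset.sum_le_sum ?_) hECEpt
    intro w hw
    have hBw : (Finset.univ.filter (fun t => pt t = w)) = B w := by rw [hB]
    rw [hBw]
    have hSw : S w = ∑ t ∈ B w, (pt t - y t) := by
      rw [hS]; simp only
      rw [← Finset.sum_filter, hB]
    have hinner : ∀ t ∈ B w, |pt t - q t| =
        |w - (∑ s ∈ B w, y s) / ((B w).card : ℝ)| := by
      intro t ht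
      rw [hqc w t ht]
      have : pt t = w := by
        rw [hB] at ht; exact (Finset.mem_filter.1 ht).2
      rw [this]
    rw [Finset.sum_congr rfl hinner, Finset.sum_const, nsmul_eq_mul]
    rcases Finset.eq_empty_or_nonempty (B w) with he | hne
    · rw [he, hSw, he]; simp
    · have hcard : (0:ℝ) < ((B w).card : ℝ) := by
        exact_mod_cast Finset.card_pos.2 hne
      have h1 : ∑ t ∈ B w, pt t = ((B w).card : ℝ) * w := by
        have hpw : ∀ t ∈ B w, pt t = w := fun t ht => by
          rw [hB] at ht; exact (Finset.mem_filter.1 ht).2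
        rw [Finset.sum_congr rfl hpw, Finset.sum_const, nsmul_eq_mul]
      have hSw2 : S w = ((B w).card : ℝ) *
          (w - (∑ s ∈ B w, y s) / ((B w).card : ℝ)) := by
        rw [hSw, Finset.sum_sub_distrib, h1, mul_sub, mul_div_cancel₀ _ hcard.ne']
      rw [hSw2, abs_mul, abs_of_pos hcard]
  -- distance from p to pt
  have hdist_ppt : ∑ t, |p t - pt t| ≤ (T:ℝ) / m := by
    have : ∀ t : Fin T, |p t - pt t| ≤ 1 / m := by
      intro t
      have hd : ((i t : ℝ) + 1) / m - (i t : ℝ) / m = 1 / m := by ring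
      rcases hp t with h | h <;> rcases hpt t with h' | h' <;> rw [h, h']
      · rw [sub_self, abs_zero]; positivity
      · rw [abs_sub_comm, abs_of_nonneg (by linarith [hlt t]), hd]
      · rw [abs_of_nonneg (by linarith [hlt t]), hd]
      · rw [sub_self, abs_zero]; positivity
    calc ∑ t, |p t - pt t| ≤ ∑ _t : Fin T, (1:ℝ)/m := Finset.sum_le_sum (fun t _ => this t)
      _ = (T:ℝ) / m := by
          rw [Finset.sum_const, nsmul_eq_mul, Finset.card_univ, Fintype.card_fin]
          ring
  -- the key bound
  have hkey : calDist p y ≤ (T:ℝ) / m + ((m:ℝ) - 1) := by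
    have hmem : (∑ t, |p t - q t|) ∈
        {c | ∃ q' : Fin T → ℝ, ECE q' y = 0 ∧ c = ∑ t, |p t - q' t|} :=
      ⟨q, hECEq, rfl⟩
    have hbdd : BddBelow {c | ∃ q' : Fin T → ℝ, ECE q' y = 0 ∧ c = ∑ t, |p t - q' t|} := by
      refine ⟨0, ?_⟩
      rintro c ⟨q', _, rfl⟩
      exact Finset.sum_nonneg (fun t _ => abs_nonneg _)
    refine le_trans (csInf_le hbdd hmem) ?_
    calc ∑ t, |p t - q t| ≤ ∑ t, (|p t - pt t| + |pt t - q t|) := by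
          apply Finset.sum_le_sum
          intro t _
          calc |p t - q t| = |(p t - pt t) + (pt t - q t)| := by ring_nf
            _ ≤ |p t - pt t| + |pt t - q t| := abs_add_le _ _
      _ = (∑ t, |p t - pt t|) + ∑ t, |pt t - q t| := Finset.sum_add_distrib
      _ ≤ (T:ℝ) / m + ((m:ℝ) - 1) := add_le_add hdist_ppt hdist_ptq
  constructor
  · refine le_trans hkey ?_
    linarith
  · intro hmc
    refine le_trans hkey ?_
    have hT0 : (0:ℝ) ≤ (T:ℝ) := by positivity
    have hs1 : (1:ℝ) ≤ Real.sqrt T := by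
      rw [show (1:ℝ) = Real.sqrt 1 by rw [Real.sqrt_one]]
      exact Real.sqrt_le_sqrt (by exact_mod_cast hT)
    have hms : Real.sqrt T ≤ (m:ℝ) := by rw [hmc]; exact Nat.le_ceil _
    have hms' : (m:ℝ) < Real.sqrt T + 1 := by
      rw [hmc]; exact Nat.ceil_lt_add_one (Real.sqrt_nonneg _)
    have h1 : (T:ℝ) / m ≤ Real.sqrt T := by
      calc (T:ℝ) / m ≤ (T:ℝ) / Real.sqrt T :=
            div_le_div_of_nonneg_left hT0 (by linarith) hms
        _ = Real.sqrt T := Real.div_sqrt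
    linarith
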